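/- Let n ≥ 1 and let r ≡ 2 (mod 4), r ≥ 2. The map p : A_{r,n} → G_{r/2,n}, defined on window notation by p(b_1^{[c_1]} ⋯ b_n^{[c_n]}) = b_1^{[c_1 ⊘ 2]} ⋯ b_n^{[c_n ⊘ 2]} (i.e., p(z,τ) = ((z_i ⊘ 2)_{i=1..n}, τ)), is a surjective group homomorphism. -/

import Mathlib

open Multiplicative

namespace ACP

/-- The action of `Sₙ` on color vectors by permuting coordinates. -/
def permAct (r n : ℕ) : Equiv.Perm (Fin n) →* MulAut (Fin n → Multiplicative (ZMod r)) where
  toFun τ :=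
    { toFun := fun z => z ∘ τ.symm
      invFun := fun z => z ∘ τ
      left_inv := fun z => by ext i; simp
      right_inv := fun z => by ext i; simp
      map_mul' := fun z w => rfl }
  map_one' := by ext z i; rfl
  map_mul' a b := by ext z i; rfl

/-- The group of colored permutations `G_{r,n} = ℤ_r ≀ Sₙ`. -/
abbrev G (r n : ℕ) : Type := (Fin n → Multiplicative (ZMod r)) ⋊[permAct r n] Equiv.Perm (Fin n)

/-- The Coxeter-like generators: `gen r n 0 = s₀` colors the digit 1 by one color,
`gen r n i = sᵢ` (for `1 ≤ i ≤ n-1`) is the adjacent transposition `(i, i+1)`. -/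
def gen (r n : ℕ) (i : ℕ) : G r n :=
  if h : 0 < i ∧ i < n then
    ⟨1, Equiv.swap ⟨i - 1, by omega⟩ ⟨i, h.2⟩⟩
  else
    ⟨fun j => if (j : ℕ) = 0 then ofAdd (1 : ZMod r) else 1, 1⟩

def zmod2ToUnits : Multiplicative (ZMod 2) →* ℤˣ where
  toFun z := (-1) ^ (toAdd z).val
  map_one' := rfl
  map_mul' := by decide

def csumHom (r n : ℕ) (hr : 2 ∣ r) :
    (Fin n → Multiplicative (ZMod r)) →* Multiplicative (ZMod 2) where
  toFun z := ofAdd (∑ i, ZMod.castHom hr (ZMod 2) (toAdd (z i)))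
  map_one' := by simp
  map_mul' z w := by
    have h : ∀ i, ZMod.castHom hr (ZMod 2) (toAdd ((z * w) i))
        = ZMod.castHom hr (ZMod 2) (toAdd (z i)) + ZMod.castHom hr (ZMod 2) (toAdd (w i)) :=
      fun i => map_add _ _ _
    simp only [h, Finset.sum_add_distrib, ofAdd_add]

/-- The sign character of `G_{r,n}` (for even `r`): sends every Coxeter-like
generator `sᵢ` to `-1`. -/
noncomputable def sgn (r n : ℕ) (hr : 2 ∣ r) : G r n →* ℤˣ :=
  SemidirectProduct.lift (zmod2ToUnits.comp (csumHom r n hr)) Equiv.Perm.sign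
    (by
      intro g
      refine MonoidHom.ext fun z => ?_
      have h1 : ∀ a x : ℤˣ, a * x * a⁻¹ = x := fun a x => by
        rw [mul_comm a x, mul_inv_cancel_right]
      simp only [MonoidHom.comp_apply, MulEquiv.coe_toMonoidHom, MulAut.conj_apply, h1]
      congr 1
      show csumHom r n hr (z ∘ g.symm) = csumHom r n hr z
      unfold csumHom
      simp only [MonoidHom.coe_mk, OneHom.coe_mk]
      congr 1
      exact Equiv.sum_comp g.symm fun j => ZMod.castHom hr (ZMod 2) (toAdd (z j)))

/-- The group of alternating colored permutations `A_{r,n}`: the kernel of the sign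
character of `G_{r,n}`. -/
noncomputable def Arn (r n : ℕ) (hr : 2 ∣ r) : Subgroup (G r n) := (sgn r n hr).ker

/-- The generators of `A_{r,n}`: `agen r n 0 = a₀ = s₀²` and
`agen r n i = aᵢ = s₀^{r/2} sᵢ` for `i ≥ 1`. -/
def agen (r n : ℕ) (i : ℕ) : G r n :=
  if i = 0 then gen r n 0 ^ 2 else gen r n 0 ^ (r / 2) * gen r n i

/-- The generating set `𝒜 = {a₀, a₁, a₁⁻¹, a₂, …, a_{n-1}}` of `A_{r,n}`. -/
def Aset (r n : ℕ) : Set (G r n) :=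
  {x | ∃ i ≤ n - 1, x = agen r n i} ∪ {(agen r n 1)⁻¹}

/-- The Coxeter-like generating set `{s₀, …, s_{n-1}}` of `G_{r,n}`. -/
def Sset (r n : ℕ) : Set (G r n) := {x | ∃ i < n, x = gen r n i}

/-- Word length of `g` with respect to a generating set `B`. -/
noncomputable def wordLength {H : Type*} [Group H] (B : Set H) (g : H) : ℕ :=
  sInf {k | ∃ w : List H, (∀ x ∈ w, x ∈ B) ∧ w.prod = g ∧ w.length = k}

/-- The element `a₁² ∈ A_{r,n}`. -/
noncomputable def a1sq (r n : ℕ) (hr : 2 ∣ r) : ↥(Arn r n hr) :=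
  ⟨agen r n 1 ^ 2, by rw [Arn, MonoidHom.mem_ker, map_pow]; exact Int.units_sq _⟩

/-- The operator `a ⊘ 2` : the residue mod `r/2` of `a/2` (`a` even) or of
`(a + r/2)/2` (`a` odd). -/
def oslash (r a : ℕ) : ℕ :=
  if a % 2 = 0 then (a / 2) % (r / 2) else ((a + r / 2) / 2) % (r / 2)

/-- `z_i(π)`, the color of digit `i+1` of `π`, as a natural number in `{0, …, r-1}`. -/
def zval (r n : ℕ) (π : G r n) (i : Fin n) : ℕ := (toAdd (π.left i)).val

/-- `csum(π) = Σ z_i(π)`. -/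
def csum (r n : ℕ) (π : G r n) : ℕ := ∑ i, zval r n π i

/-- Rank of the colored letter `b^{[c]}` (with `1 ≤ b ≤ n`, `0 ≤ c ≤ r-1`) in the
length order `n^{[r-1]} < ⋯ < 1^{[1]} < 1 < 2 < ⋯ < n`. -/
def rank (r n : ℕ) (b c : ℕ) : ℕ :=
  if c = 0 then n * (r - 1) + (b - 1) else (n - b) * (r - 1) + (r - 1 - c)

/-- Rank (in the length order) of the letter in position `i` of the window of `π`. -/
def colRank (r n : ℕ) (π : G r n) (i : Fin n) : ℕ :=
  rank r n ((π.right i : ℕ) + 1) (zval r n π (π.right i))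

/-- The inversion number of `π ∈ G_{r,n}` with respect to the length order. -/
noncomputable def inv (r n : ℕ) (π : G r n) : ℕ :=
  Nat.card {p : Fin n × Fin n // p.1 < p.2 ∧ colRank r n π p.2 < colRank r n π p.1}

/-- The ordinary inversion number of a permutation. -/
noncomputable def invPerm (n : ℕ) (τ : Equiv.Perm (Fin n)) : ℕ :=
  Nat.card {p : Fin n × Fin n // p.1 < p.2 ∧ τ p.2 < τ p.1}

/-- The covering map `p : A_{r,n} → G_{r/2,n}`, `p(z, τ) = ((zᵢ ⊘ 2)ᵢ, τ)`. -/
def pmap (r n : ℕ) (π : G r n) : G (r / 2) n :=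
  ⟨fun i => ofAdd ((oslash r (zval r n π i) : ZMod (r / 2))), π.right⟩

/-- The section `s : G_{r/2,n} → A_{r,n}`: doubles all colors (mod `r`), adding `r/2`
to the color of the digit `1` when `inv(|π|)` is odd. -/
noncomputable def smap (r n : ℕ) (π : G (r / 2) n) : G r n :=
  ⟨fun d => ofAdd
      (((2 * zval (r / 2) n π d +
        if (d : ℕ) = 0 ∧ invPerm n π.right % 2 = 1 then r / 2 else 0 : ℕ) : ZMod r)),
   π.right⟩

/-- `c(π) = Σ_{i : z_i(π) ≠ 0} (i - 1)` (digits are `1`-based). -/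
def cstat (r n : ℕ) (π : G r n) : ℕ :=
  ∑ i : Fin n, if zval r n π i ≠ 0 then (i : ℕ) else 0

/-- The number of absolute transparent inversions of `π`. -/
noncomputable def tinv (r n : ℕ) (π : G r n) : ℕ :=
  Nat.card {p : Fin n × Fin n //
    zval r n π p.1 = r / 2 ∧ p.2 < p.1 ∧ π.right⁻¹ p.1 < π.right⁻¹ p.2}

/-- The (digit-indexed) Lehmer code `l_i = #{j : j > i, τ⁻¹(i) > τ⁻¹(j)}`. -/
noncomputable def lehmer (n : ℕ) (τ : Equiv.Perm (Fin n)) (i : Fin n) : ℕ :=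
  Nat.card {j : Fin n // i < j ∧ τ⁻¹ j < τ⁻¹ i}


/-- `μ(π)`: the minimum of `β(ω) + n(ω)` over all factorizations
`ω = b₀ s₀^{i₁} b₁ ⋯ s₀^{i_{k+1}} b_{k+1}` of `π`, where each `b_u` is a word in
`s₁, …, s_{n-1}` only, `n(ω)` is the number of letters `sᵢ` with `i ≠ 0`, and
`β(ω) = Σ_u (i_u ⊘ 2)`. -/
noncomputable def mu (r n : ℕ) (π : G r n) : ℕ :=
  sInf {m | ∃ (b₀ : List ℕ) (L : List (ℕ × List ℕ)),
    (∀ x ∈ b₀, 1 ≤ x ∧ x ≤ n - 1) ∧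
    (∀ q ∈ L, ∀ x ∈ q.2, 1 ≤ x ∧ x ≤ n - 1) ∧
    π = (b₀.map (gen r n)).prod *
        (L.map (fun q => gen r n 0 ^ q.1 * (q.2.map (gen r n)).prod)).prod ∧
    m = (L.map (fun q => oslash r q.1)).sum +
        (b₀.length + (L.map (fun q => q.2.length)).sum)}

/-- The flag-inversion number on `A_{r,n}`:
`finv_A(π) = (r/2)·inv(|π|) + Σᵢ (cᵢ(π) ⊘ 2)` where `cᵢ(π) = r - zᵢ(π⁻¹) (mod r)`. -/
noncomputable def finvA (r n : ℕ) (π : G r n) : ℕ :=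
  (r / 2) * invPerm n π.right + ∑ i, oslash r ((r - zval r n π⁻¹ i) % r)

/-- The number of (colored) right-to-left minima of `π` whose color is not in `{0, r/2}`. -/
noncomputable def rtlMinA (r n : ℕ) (π : G r n) : ℕ :=
  Nat.card {i : Fin n // (∀ j : Fin n, i < j → π.right i < π.right j) ∧
    zval r n π (π.right i) ≠ 0 ∧ zval r n π (π.right i) ≠ r / 2}

/-- The defining relators of the Coxeter-like presentation of `A_{r,n}` on generators
`x₀, …, x_{n-1}`. -/
def rels (r n : ℕ) : Set (FreeGroup (Fin n)) :=
  {w | ∃ i : Fin n, (i : ℕ) = 0 ∧ w = FreeGroup.of i ^ (r / 2)} ∪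
  {w | ∃ i : Fin n, (i : ℕ) = 1 ∧ w = FreeGroup.of i ^ 4} ∪
  {w | ∃ i : Fin n, 2 ≤ (i : ℕ) ∧ w = FreeGroup.of i ^ 2} ∪
  {w | ∃ i j : Fin n, (i : ℕ) ≠ 1 ∧ (j : ℕ) ≠ 1 ∧ (i : ℕ) + 1 < (j : ℕ) ∧
    w = FreeGroup.of i * FreeGroup.of j * (FreeGroup.of i)⁻¹ * (FreeGroup.of j)⁻¹} ∪
  {w | ∃ i j : Fin n, 1 ≤ (i : ℕ) ∧ (j : ℕ) = (i : ℕ) + 1 ∧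
    w = (FreeGroup.of i * FreeGroup.of j) ^ 3} ∪
  {w | ∃ i j : Fin n, (i : ℕ) = 0 ∧ (j : ℕ) = 1 ∧
    w = (FreeGroup.of i * FreeGroup.of j) ^ (2 * r)} ∪
  {w | ∃ i j : Fin n, (i : ℕ) = 0 ∧ (j : ℕ) = 1 ∧
    w = (FreeGroup.of i * (FreeGroup.of j)⁻¹) ^ (2 * r)} ∪
  {w | ∃ i j : Fin n, (i : ℕ) = 0 ∧ (j : ℕ) = 1 ∧
    w = FreeGroup.of i * FreeGroup.of j ^ 2 * (FreeGroup.of i)⁻¹ * (FreeGroup.of j ^ 2)⁻¹} ∪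
  {w | ∃ i j : Fin n, (i : ℕ) = 1 ∧ 2 < (j : ℕ) ∧
    w = FreeGroup.of i * FreeGroup.of j * FreeGroup.of i * (FreeGroup.of j)⁻¹}

end ACP

/-! On colors, `a ⊘ 2` is the residue `c` modulo `r/2` with `2c ≡ a`: it is reduction
`ℤ_r → ℤ_{r/2}` followed by division by `2`, which is invertible because `r/2` is odd. So `p` is
the map of wreath products induced by a surjective homomorphism of color groups, hence a surjective
homomorphism on all of `G_{r,n}`. A preimage of odd sign is corrected by the kernel element that
colors the digit `1` by `r/2`, whose sign is `-1` since `r/2` is odd. -/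

namespace ACP

section ColorMap

variable {r s n : ℕ}

def colorMap (f : Multiplicative (ZMod r) →* Multiplicative (ZMod s)) : G r n →* G s n :=
  SemidirectProduct.map (f.compLeft (Fin n)) (MonoidHom.id _) fun _ => MonoidHom.ext fun _ => rfl

theorem colorMap_surjective {f : Multiplicative (ZMod r) →* Multiplicative (ZMod s)}
    (hf : Function.Surjective f) : Function.Surjective (colorMap (n := n) f) := fun g =>
  ⟨⟨Function.surjInv hf ∘ g.left, g.right⟩,
    SemidirectProduct.ext (funext fun i => Function.surjInv_eq hf (g.left i)) rfl⟩

theorem colorMap_inl_mulSingle (f : Multiplicative (ZMod r) →* Multiplicative (ZMod s))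
    (i : Fin n) (c : Multiplicative (ZMod r)) :
    colorMap f (SemidirectProduct.inl (Pi.mulSingle i c)) =
      SemidirectProduct.inl (Pi.mulSingle i (f c)) := by
  rw [colorMap, SemidirectProduct.map_inl]
  exact congrArg _ (funext (Pi.apply_mulSingle (fun _ => f) (fun _ => map_one f) i c))

end ColorMap

theorem sgn_inl_mulSingle {r n : ℕ} (hr : 2 ∣ r) (i : Fin n) (a : ZMod r) :
    sgn r n hr (SemidirectProduct.inl (Pi.mulSingle i (ofAdd a))) =
      zmod2ToUnits (ofAdd (ZMod.castHom hr (ZMod 2) a)) := by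
  rw [sgn, SemidirectProduct.lift_inl, MonoidHom.comp_apply]
  simp only [csumHom, MonoidHom.coe_mk, OneHom.coe_mk]
  rw [Finset.sum_eq_single i (fun j _ hj => by simp [hj]) (by simp)]
  simp

section Halving

variable {r : ℕ}

theorem two_mul_oslash (hr : r % 4 = 2) (a : ℕ) : (2 : ZMod (r / 2)) * oslash r a = a := by
  rw [← Nat.cast_two (R := ZMod (r / 2)), oslash]
  split_ifs with ha
  · rw [ZMod.natCast_mod, ← Nat.cast_mul, Nat.mul_div_cancel' (by omega)]
  · rw [ZMod.natCast_mod, ← Nat.cast_mul, Nat.mul_div_cancel' (by omega),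
      Nat.cast_add, ZMod.natCast_self, add_zero]

def halve (hr : r % 4 = 2) : ZMod r →+ ZMod (r / 2) :=
  AddMonoidHom.mulLeft
      (((ZMod.unitOfCoprime 2 (Nat.prime_two.coprime_iff_not_dvd.mpr (by omega)))⁻¹ :
        (ZMod (r / 2))ˣ) : ZMod (r / 2)) |>.comp
    (ZMod.castHom (Nat.div_dvd_of_dvd (by omega : 2 ∣ r)) (ZMod (r / 2))).toAddMonoidHom

theorem oslash_val (hr : r % 4 = 2) (a : ZMod r) :
    (oslash r a.val : ZMod (r / 2)) = halve hr a := by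
  have : NeZero r := ⟨by omega⟩
  rw [halve, AddMonoidHom.comp_apply, AddMonoidHom.coe_mulLeft, Units.eq_inv_mul_iff_mul_eq,
    ZMod.coe_unitOfCoprime, Nat.cast_ofNat, two_mul_oslash hr, ZMod.natCast_val]
  rfl

theorem halve_surjective (hr : r % 4 = 2) : Function.Surjective (halve hr) :=
  (Units.mulLeft_bijective _).surjective.comp
    (ZMod.castHom_surjective (Nat.div_dvd_of_dvd (by omega : 2 ∣ r)))

theorem halve_natCast_half (hr : r % 4 = 2) : halve hr (r / 2 : ℕ) = 0 := by
  simp [halve]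

theorem pmap_eq_colorMap_halve (hr : r % 4 = 2) (n : ℕ) :
    pmap r n = colorMap (halve hr).toMultiplicative := by
  funext x
  exact SemidirectProduct.ext (funext fun i => congrArg ofAdd (oslash_val hr _)) rfl

theorem sgn_inl_mulSingle_half (hr : r % 4 = 2) {n : ℕ} (i : Fin n) :
    sgn r n (by omega) (SemidirectProduct.inl (Pi.mulSingle i (ofAdd (r / 2 : ℕ)))) = -1 := by
  rw [sgn_inl_mulSingle, map_natCast, ← ZMod.natCast_mod, show r / 2 % 2 = 1 by omega]
  rfl

end Halving

end ACP

/-- `p : A_{r,n} → G_{r/2,n}` is a surjective group homomorphism. -/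
theorem pmap_hom_surjective (r n : ℕ) (hn : 1 ≤ n) (hr : r % 4 = 2) :
    (∀ x ∈ ACP.Arn r n (by omega), ∀ y ∈ ACP.Arn r n (by omega),
        ACP.pmap r n (x * y) = ACP.pmap r n x * ACP.pmap r n y) ∧
    (∀ g : ACP.G (r / 2) n, ∃ x ∈ ACP.Arn r n (by omega), ACP.pmap r n x = g) := by
  rw [ACP.pmap_eq_colorMap_halve hr]
  refine ⟨fun x _ y _ => map_mul _ x y, fun g => ?_⟩
  obtain ⟨y, rfl⟩ :=
    ACP.colorMap_surjective (f := (ACP.halve hr).toMultiplicative) (ACP.halve_surjective hr) g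
  set t : ACP.G r n := SemidirectProduct.inl (Pi.mulSingle ⟨0, hn⟩ (ofAdd (r / 2 : ℕ)))
  have ht_ker : ACP.colorMap (ACP.halve hr).toMultiplicative t = 1 := by
    rw [ACP.colorMap_inl_mulSingle]
    simp [ACP.halve_natCast_half]
  have ht_sgn : ACP.sgn r n (by omega) t = -1 := ACP.sgn_inl_mulSingle_half hr _
  rcases Int.units_eq_one_or (ACP.sgn r n (by omega) y) with hy | hy
  · exact ⟨y, hy, rfl⟩
  · refine ⟨y * t, ?_, by rw [map_mul, ht_ker, mul_one]⟩
    rw [ACP.Arn, MonoidHom.mem_ker, map_mul, hy, ht_sgn]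
    rfl
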